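/- arXiv:1601.04038 — 5 statements merged into one kernel-verified Lean document; each statement's English description precedes it below -/
import Mathlib

section
/- In the TAS instance constructed from a 3-Dimensional Matching instance (X, Y, Z, W) with |X| = |Y| = |Z| = u, a job j_w corresponding to a triple w = (x, y, z) ∈ W reaches its quality threshold Q_{j_w} = 3 under a feasible solution if and only if exactly the worker set {x, y, z} is assigned to j_w. -/
/-- A TAS instance: timeline `[t]`, knowledge domains `K`, workers with
expertise, wage and availability, and jobs with domain, quality threshold,
cost threshold and release date. -/
structure TASInstance (K Worker Job : Type) where
  t : ℕ
  e : Worker → K → ℕ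
  w : Worker → K → ℕ
  avail : Worker → ℕ → Bool
  dom : Job → K
  Q : Job → ℕ
  C : Job → ℕ
  r : Job → ℕ
  r_lt : ∀ j, r j < t

namespace TASInstance

variable {K Worker Job : Type}

/-- Cost of job `j` under a solution: total wage of assigned workers. -/
def cost (x : TASInstance K Worker Job) (y : Job → ℕ → Option Worker) (j : Job) : ℕ :=
  ∑ d ∈ Finset.range x.t, ((y j d).elim 0 fun i => x.w i (x.dom j))

/-- Quality of job `j` under a solution: total expertise of assigned workers. -/
def qual (x : TASInstance K Worker Job) (y : Job → ℕ → Option Worker) (j : Job) : ℕ :=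
  ∑ d ∈ Finset.range x.t, ((y j d).elim 0 fun i => x.e i (x.dom j))

/-- Feasibility constraints (a)-(f); (b) holds by representation. -/
def Feasible (x : TASInstance K Worker Job) (y : Job → ℕ → Option Worker) : Prop :=
  -- (a) no worker on two distinct jobs at the same time
  (∀ d j j' i, j ≠ j' → y j d = some i → y j' d ≠ some i) ∧
  -- (c) no worker assigned twice to the same job
  (∀ j d d' i, d ≠ d' → y j d = some i → y j d' ≠ some i) ∧
  -- (d) workers only on days where they are available
  (∀ j d i, y j d = some i → x.avail i d = true) ∧
  -- (e) no assignment before the release date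
  (∀ j d, d < x.r j → y j d = none) ∧
  -- solutions are vectors of dimension t
  (∀ j d, x.t ≤ d → y j d = none) ∧
  -- (f) no job exceeds its budget
  (∀ j, x.cost y j ≤ x.C j)

/-- A job is completed if it reaches its quality threshold. -/
def CompletedJob (x : TASInstance K Worker Job) (y : Job → ℕ → Option Worker) (j : Job) : Prop :=
  x.Q j ≤ x.qual y j

/-- The objective `m(x,y)`: number of completed jobs. -/
def measure (x : TASInstance K Worker Job) [Fintype Job] (y : Job → ℕ → Option Worker) : ℕ :=
  (Finset.univ.filter fun j => x.Q j ≤ x.qual y j).card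

end TASInstance

/-- The TAS instance constructed from a 3-Dimensional Matching instance `(X, Y, Z, W)`:
3 timeslots, one domain and one job per triple `w ∈ W` (with `Q = C = 3` and release
date 0), workers `X ∪ Y ∪ Z` available exactly on days 0, 1, 2 respectively, and unit
expertise and wage exactly for the three members of each triple in its job's domain. -/
def tdmInstance (X Y Z : Type) [DecidableEq X] [DecidableEq Y] [DecidableEq Z]
    (W : Finset (X × Y × Z)) :
    TASInstance {w // w ∈ W} (X ⊕ Y ⊕ Z) {w // w ∈ W} where
  t := 3
  e := fun i k =>
    match i with
    | Sum.inl x => if x = k.val.1 then 1 else 0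
    | Sum.inr (Sum.inl y) => if y = k.val.2.1 then 1 else 0
    | Sum.inr (Sum.inr z) => if z = k.val.2.2 then 1 else 0
  w := fun i k =>
    match i with
    | Sum.inl x => if x = k.val.1 then 1 else 0
    | Sum.inr (Sum.inl y) => if y = k.val.2.1 then 1 else 0
    | Sum.inr (Sum.inr z) => if z = k.val.2.2 then 1 else 0
  avail := fun i d =>
    match i with
    | Sum.inl _ => d == 0
    | Sum.inr (Sum.inl _) => d == 1
    | Sum.inr (Sum.inr _) => d == 2
  dom := fun j => j
  Q := fun _ => 3
  C := fun _ => 3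
  r := fun _ => 0
  r_lt := fun _ => by simp

/-- `M` is a 3-dimensional matching: distinct triples differ in all coordinates. -/
def Is3DMatching {X Y Z : Type} (M : Finset (X × Y × Z)) : Prop :=
  ∀ w ∈ M, ∀ w' ∈ M, w ≠ w' →
    w.1 ≠ w'.1 ∧ w.2.1 ≠ w'.2.1 ∧ w.2.2 ≠ w'.2.2

/-- in the constructed TAS instance, a job `j_w` for `w = (x,y,z) ∈ W`
reaches its quality threshold `Q = 3` under a feasible solution iff exactly the worker
set `{x, y, z}` is assigned to it. -/
theorem tdm_job_completed_iff_triple_assigned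
    {X Y Z : Type} [DecidableEq X] [DecidableEq Y] [DecidableEq Z]
    (W : Finset (X × Y × Z))
    (σ : {w // w ∈ W} → ℕ → Option (X ⊕ Y ⊕ Z))
    (hσ : (tdmInstance X Y Z W).Feasible σ)
    (j : {w // w ∈ W}) :
    (tdmInstance X Y Z W).CompletedJob σ j ↔
      (∀ i : X ⊕ Y ⊕ Z, (∃ d, σ j d = some i) ↔
        (i = Sum.inl j.val.1 ∨ i = Sum.inr (Sum.inl j.val.2.1) ∨
          i = Sum.inr (Sum.inr j.val.2.2))) := by
  obtain ⟨ha, hc, hd, he, ht, hf⟩ := hσ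
  have hday : ∀ d i, σ j d = some i →
      (d = 0 ∧ ∃ x, i = Sum.inl x) ∨ (d = 1 ∧ ∃ y, i = Sum.inr (Sum.inl y)) ∨
      (d = 2 ∧ ∃ z, i = Sum.inr (Sum.inr z)) := by
    intro d i h
    have hav := hd j d i h
    rcases i with x | y | z
    · left; refine ⟨?_, x, rfl⟩; simpa [tdmInstance] using hav
    · right; left; refine ⟨?_, y, rfl⟩; simpa [tdmInstance] using hav
    · right; right; refine ⟨?_, z, rfl⟩; simpa [tdmInstance] using hav
  set E : ℕ → ℕ := fun d =>
    ((σ j d).elim 0 fun i => (tdmInstance X Y Z W).e i ((tdmInstance X Y Z W).dom j)) with hE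
  have hqual : (tdmInstance X Y Z W).qual σ j = E 0 + E 1 + E 2 := by
    simp [TASInstance.qual, tdmInstance, Finset.sum_range_succ, hE]
  have hEle : ∀ d, E d ≤ 1 := by
    intro d
    rcases h : σ j d with _ | i
    · simp [hE, h]
    · rcases i with x | y | z <;> simp [hE, h, tdmInstance] <;> split_ifs <;> simp
  constructor
  · intro hq
    have hq3 : 3 ≤ E 0 + E 1 + E 2 := by
      rw [← hqual]; exact hq
    have e0 : E 0 = 1 := by have := hEle 0; have := hEle 1; have := hEle 2; omega
    have e1 : E 1 = 1 := by have := hEle 0; have := hEle 1; have := hEle 2; omega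
    have e2 : E 2 = 1 := by have := hEle 0; have := hEle 1; have := hEle 2; omega
    have s0 : σ j 0 = some (Sum.inl j.val.1) := by
      rcases h : σ j 0 with _ | i
      · rw [hE] at e0; simp [h] at e0
      · rcases hday 0 i h with ⟨_, x, rfl⟩ | ⟨h1, _⟩ | ⟨h1, _⟩
        · rw [hE] at e0; simp [h, tdmInstance] at e0
          by_cases hx : x = j.val.1
          · rw [hx]
          · simp [hx] at e0
        · omega
        · omega
    have s1 : σ j 1 = some (Sum.inr (Sum.inl j.val.2.1)) := by
      rcases h : σ j 1 with _ | i
      · rw [hE] at e1; simp [h] at e1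
      · rcases hday 1 i h with ⟨h1, _⟩ | ⟨_, y, rfl⟩ | ⟨h1, _⟩
        · omega
        · rw [hE] at e1; simp [h, tdmInstance] at e1
          by_cases hy : y = j.val.2.1
          · rw [hy]
          · simp [hy] at e1
        · omega
    have s2 : σ j 2 = some (Sum.inr (Sum.inr j.val.2.2)) := by
      rcases h : σ j 2 with _ | i
      · rw [hE] at e2; simp [h] at e2
      · rcases hday 2 i h with ⟨h1, _⟩ | ⟨h1, _⟩ | ⟨_, z, rfl⟩
        · omega
        · omega
        · rw [hE] at e2; simp [h, tdmInstance] at e2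
          by_cases hz : z = j.val.2.2
          · rw [hz]
          · simp [hz] at e2
    intro i
    constructor
    · rintro ⟨d, hdi⟩
      rcases hday d i hdi with ⟨rfl, x, rfl⟩ | ⟨rfl, y, rfl⟩ | ⟨rfl, z, rfl⟩
      · rw [s0] at hdi; left; exact (Option.some.injEq _ _ ▸ hdi).symm
      · rw [s1] at hdi; right; left; exact (Option.some.injEq _ _ ▸ hdi).symm
      · rw [s2] at hdi; right; right; exact (Option.some.injEq _ _ ▸ hdi).symm
    · rintro (rfl | rfl | rfl)
      · exact ⟨0, s0⟩
      · exact ⟨1, s1⟩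
      · exact ⟨2, s2⟩
  · intro h
    obtain ⟨d0, hd0⟩ := (h (Sum.inl j.val.1)).2 (Or.inl rfl)
    obtain ⟨d1, hd1⟩ := (h (Sum.inr (Sum.inl j.val.2.1))).2 (Or.inr (Or.inl rfl))
    obtain ⟨d2, hd2⟩ := (h (Sum.inr (Sum.inr j.val.2.2))).2 (Or.inr (Or.inr rfl))
    rcases hday d0 _ hd0 with ⟨rfl, _⟩ | ⟨_, _, hx⟩ | ⟨_, _, hx⟩ <;>
      try simp at hx
    rcases hday d1 _ hd1 with ⟨_, _, hx⟩ | ⟨rfl, _⟩ | ⟨_, _, hx⟩ <;>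
      try simp at hx
    rcases hday d2 _ hd2 with ⟨_, _, hx⟩ | ⟨_, _, hx⟩ | ⟨rfl, _⟩ <;>
      try simp at hx
    show (3:ℕ) ≤ _
    rw [hqual, hE]
    simp [hd0, hd1, hd2, tdmInstance]
end

section
/- If M ⊆ W is a perfect 3-dimensional matching of (X, Y, Z, W) with |X| = |Y| = |Z| = u, then the constructed TAS instance admits a feasible solution with exactly u completed jobs, namely U_{j_w} = (x, y, z) for each w = (x, y, z) ∈ M and the empty assignment for all other jobs. -/
/-- The solution constructed from a matching `M ⊆ W`: for `w = (x,y,z) ∈ M` the job `j_w`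
receives `x` on day 0, `y` on day 1 and `z` on day 2; all other jobs get the empty
assignment. -/
def tdmSolution {X Y Z : Type} [DecidableEq X] [DecidableEq Y] [DecidableEq Z]
    (W M : Finset (X × Y × Z)) :
    {w // w ∈ W} → ℕ → Option (X ⊕ Y ⊕ Z) := fun j d =>
  if j.val ∈ M then
    match d with
    | 0 => some (Sum.inl j.val.1)
    | 1 => some (Sum.inr (Sum.inl j.val.2.1))
    | 2 => some (Sum.inr (Sum.inr j.val.2.2))
    | _ => none
  else none

/-!
Each job `j_w` with `w = (x, y, z) ∈ M` gets `x`, `y`, `z` on the only days they are available;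
each of them is worth one unit of expertise and wage in the domain of `w`, so `j_w` reaches
quality 3 at cost 3, while unassigned jobs cost nothing. Two jobs of `M` never share a worker on
a day because triples of a matching differ in every coordinate, and a job never gets a worker
twice because every worker is available on a single day. The completed jobs are exactly those
of `M`, and there are `|M| = u` of them.
-/

namespace TASInstance

variable {K Worker Job : Type}

theorem not_reassigned_of_avail_unique (x : TASInstance K Worker Job)
    (y : Job → ℕ → Option Worker)
    (havail_unique : ∀ i d d', x.avail i d = true → x.avail i d' = true → d = d')
    (havail : ∀ j d i, y j d = some i → x.avail i d = true) :
    ∀ j d d' i, d ≠ d' → y j d = some i → y j d' ≠ some i :=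
  fun j d d' i hne h h' => hne (havail_unique i d d' (havail j d i h) (havail j d' i h'))

theorem measure_eq_card_of_completedJob_iff [Fintype Job] (x : TASInstance K Worker Job)
    (y : Job → ℕ → Option Worker) (S : Finset Job) (h : ∀ j, x.CompletedJob y j ↔ j ∈ S) :
    x.measure y = S.card := by
  unfold measure
  congr 1
  ext j
  simpa [CompletedJob] using h j

end TASInstance

theorem Finset.card_filter_val_mem_of_subset {α : Type*} [DecidableEq α] {W M : Finset α}
    (hMW : M ⊆ W) : (Finset.univ.filter fun j : {w // w ∈ W} => j.val ∈ M).card = M.card := by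
  rw [← Finset.card_map (Function.Embedding.subtype _)]
  congr 1
  ext a
  simpa using fun h => hMW h

section TDM

variable {X Y Z : Type}

/-- `U_{j_w}` for a triple `w = (x, y, z)` in the matching. -/
def tripleSchedule (w : X × Y × Z) : ℕ → Option (X ⊕ Y ⊕ Z)
  | 0 => some (Sum.inl w.1)
  | 1 => some (Sum.inr (Sum.inl w.2.1))
  | 2 => some (Sum.inr (Sum.inr w.2.2))
  | _ => none

theorem Is3DMatching.eq_of_tripleSchedule_eq_some {M : Finset (X × Y × Z)} (hM : Is3DMatching M)
    {w w' : X × Y × Z} (hw : w ∈ M) (hw' : w' ∈ M) {d : ℕ} {i : X ⊕ Y ⊕ Z}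
    (h : tripleSchedule w d = some i) (h' : tripleSchedule w' d = some i) : w = w' := by
  by_contra hne
  obtain ⟨h₁, h₂, h₃⟩ := hM w hw w' hw' hne
  rcases d with _ | _ | _ | d <;> simp only [tripleSchedule, Option.some.injEq, reduceCtorEq] at h h'
  all_goals subst h; simp_all [eq_comm]

theorem tripleSchedule_of_three_le (w : X × Y × Z) {d : ℕ} (hd : 3 ≤ d) :
    tripleSchedule w d = none := by
  obtain ⟨d, rfl⟩ := Nat.exists_eq_add_of_le' hd
  rfl

variable [DecidableEq X] [DecidableEq Y] [DecidableEq Z]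

theorem tdmSolution_eq (W M : Finset (X × Y × Z)) (j : {w // w ∈ W}) (d : ℕ) :
    tdmSolution W M j d = if j.val ∈ M then tripleSchedule j.val d else none := by
  rcases d with _ | _ | _ | d <;> rfl

theorem tdmInstance_avail_unique (W : Finset (X × Y × Z)) (i : X ⊕ Y ⊕ Z) (d d' : ℕ)
    (h : (tdmInstance X Y Z W).avail i d = true) (h' : (tdmInstance X Y Z W).avail i d' = true) :
    d = d' := by
  rcases i with _ | _ | _ <;> simp_all [tdmInstance]

theorem tdmInstance_avail_of_tripleSchedule_eq_some (W : Finset (X × Y × Z)) {w : X × Y × Z}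
    {d : ℕ} {i : X ⊕ Y ⊕ Z} (h : tripleSchedule w d = some i) :
    (tdmInstance X Y Z W).avail i d = true := by
  rcases d with _ | _ | _ | d <;> simp only [tripleSchedule, Option.some.injEq, reduceCtorEq] at h
  all_goals subst h; rfl

theorem tdmSolution_avail (W M : Finset (X × Y × Z)) (j : {w // w ∈ W}) (d : ℕ)
    (i : X ⊕ Y ⊕ Z) (h : tdmSolution W M j d = some i) :
    (tdmInstance X Y Z W).avail i d = true := by
  rw [tdmSolution_eq] at h
  split_ifs at h
  exact tdmInstance_avail_of_tripleSchedule_eq_some W h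

theorem tdmSolution_ne_of_ne {W M : Finset (X × Y × Z)} (hM : Is3DMatching M) (d : ℕ)
    (j j' : {w // w ∈ W}) (i : X ⊕ Y ⊕ Z) (hne : j ≠ j') (h : tdmSolution W M j d = some i) :
    tdmSolution W M j' d ≠ some i := by
  intro h'
  rw [tdmSolution_eq] at h h'
  split_ifs at h h' with hj hj'
  exact hne (Subtype.ext (hM.eq_of_tripleSchedule_eq_some hj hj' h h'))

theorem tdmSolution_of_three_le (W M : Finset (X × Y × Z)) (j : {w // w ∈ W}) {d : ℕ}
    (hd : 3 ≤ d) : tdmSolution W M j d = none := by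
  rw [tdmSolution_eq, tripleSchedule_of_three_le _ hd, ite_self]

theorem tdmInstance_cost_eq_qual (W : Finset (X × Y × Z))
    (y : {w // w ∈ W} → ℕ → Option (X ⊕ Y ⊕ Z)) :
    (tdmInstance X Y Z W).cost y = (tdmInstance X Y Z W).qual y :=
  rfl

theorem tdmInstance_qual_tdmSolution (W M : Finset (X × Y × Z)) (j : {w // w ∈ W}) :
    (tdmInstance X Y Z W).qual (tdmSolution W M) j = if j.val ∈ M then 3 else 0 := by
  by_cases hj : j.val ∈ M <;>
    simp [TASInstance.qual, tdmInstance, tdmSolution_eq, tripleSchedule, hj, Finset.sum_range_succ]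

theorem tdmInstance_completedJob_tdmSolution_iff (W M : Finset (X × Y × Z)) (j : {w // w ∈ W}) :
    (tdmInstance X Y Z W).CompletedJob (tdmSolution W M) j ↔ j.val ∈ M := by
  rw [TASInstance.CompletedJob, tdmInstance_qual_tdmSolution]
  split_ifs with hj <;> simp [tdmInstance, hj]

end TDM

theorem tdm_perfect_matching_gives_solution_general
    {X Y Z : Type} [DecidableEq X] [DecidableEq Y] [DecidableEq Z]
    (u : ℕ)
    (W M : Finset (X × Y × Z)) (hMW : M ⊆ W)
    (hM : Is3DMatching M) (hcard : M.card = u) :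
    (tdmInstance X Y Z W).Feasible (tdmSolution W M) ∧
      (tdmInstance X Y Z W).measure (tdmSolution W M) = u := by
  have havail := tdmSolution_avail W M
  have hcost (j : {w // w ∈ W}) : (tdmInstance X Y Z W).cost (tdmSolution W M) j ≤ 3 := by
    rw [tdmInstance_cost_eq_qual, tdmInstance_qual_tdmSolution]
    split_ifs <;> omega
  refine ⟨⟨tdmSolution_ne_of_ne hM,
    (tdmInstance X Y Z W).not_reassigned_of_avail_unique _ (tdmInstance_avail_unique W) havail,
    havail, fun _ d hd => absurd hd d.not_lt_zero, fun j _ => tdmSolution_of_three_le W M j,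
    hcost⟩, ?_⟩
  rw [TASInstance.measure_eq_card_of_completedJob_iff _ _ {j | j.val ∈ M}
    (fun j => by simpa using tdmInstance_completedJob_tdmSolution_iff W M j),
    Finset.card_filter_val_mem_of_subset hMW, hcard]

/-- if `M ⊆ W` is a perfect 3-dimensional matching (`|M| = u` where
`|X| = |Y| = |Z| = u`), then the constructed solution is feasible for the constructed
TAS instance and completes exactly `u` jobs. -/
theorem tdm_perfect_matching_gives_solution
    {X Y Z : Type} [DecidableEq X] [DecidableEq Y] [DecidableEq Z]
    [Fintype X] [Fintype Y] [Fintype Z] (u : ℕ)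
    (hX : Fintype.card X = u) (hY : Fintype.card Y = u) (hZ : Fintype.card Z = u)
    (W M : Finset (X × Y × Z)) (hMW : M ⊆ W)
    (hM : Is3DMatching M) (hcard : M.card = u) :
    (tdmInstance X Y Z W).Feasible (tdmSolution W M) ∧
      (tdmInstance X Y Z W).measure (tdmSolution W M) = u :=
  tdm_perfect_matching_gives_solution_general u W M hMW hM hcard
end

section
/- If the TAS instance constructed from a 3DM instance (X, Y, Z, W) with |X| = |Y| = |Z| = u admits a feasible solution with u completed jobs, then the set M = {(x,y,z) : U_{j_{(x,y,z)}} = (x,y,z) and j_{(x,y,z)} is completed} is a perfect 3-dimensional matching of size u contained in W. -/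
/-- if the constructed TAS instance has a feasible solution with `u`
completed jobs, then `M = {(x,y,z) ∈ W : U_{j_{(x,y,z)}} = (x,y,z) and j_{(x,y,z)} is
completed}` is a perfect 3-dimensional matching of size `u` contained in `W`. -/
theorem tdm_solution_gives_perfect_matching
    {X Y Z : Type} [DecidableEq X] [DecidableEq Y] [DecidableEq Z]
    [Fintype X] [Fintype Y] [Fintype Z] (u : ℕ)
    (hX : Fintype.card X = u) (hY : Fintype.card Y = u) (hZ : Fintype.card Z = u)
    (W : Finset (X × Y × Z))
    (σ : {w // w ∈ W} → ℕ → Option (X ⊕ Y ⊕ Z))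
    (hσ : (tdmInstance X Y Z W).Feasible σ)
    (hm : (tdmInstance X Y Z W).measure σ = u) :
    ∀ M : Finset (X × Y × Z),
      M = (W.attach.filter (fun j =>
            3 ≤ (tdmInstance X Y Z W).qual σ j ∧
            σ j 0 = some (Sum.inl j.val.1) ∧
            σ j 1 = some (Sum.inr (Sum.inl j.val.2.1)) ∧
            σ j 2 = some (Sum.inr (Sum.inr j.val.2.2)))).image Subtype.val →
      M ⊆ W ∧ Is3DMatching M ∧ M.card = u := by
  intro M hM
  obtain ⟨ha, hc, hd, he, ht, hf⟩ := hσ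
  -- key: every completed job has the canonical assignment
  have key : ∀ j : {w // w ∈ W}, 3 ≤ (tdmInstance X Y Z W).qual σ j →
      σ j 0 = some (Sum.inl j.val.1) ∧ σ j 1 = some (Sum.inr (Sum.inl j.val.2.1)) ∧
      σ j 2 = some (Sum.inr (Sum.inr j.val.2.2)) := by
    intro j hq
    have hqual : (tdmInstance X Y Z W).qual σ j =
        ((σ j 0).elim 0 fun i => (tdmInstance X Y Z W).e i j) +
        ((σ j 1).elim 0 fun i => (tdmInstance X Y Z W).e i j) +
        ((σ j 2).elim 0 fun i => (tdmInstance X Y Z W).e i j) := by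
      show ∑ d ∈ Finset.range 3, _ = _
      rw [Finset.sum_range_succ, Finset.sum_range_succ, Finset.sum_range_one]
      rfl
    have bound : ∀ d, ((σ j d).elim 0 fun i => (tdmInstance X Y Z W).e i j) ≤ 1 := by
      intro d
      cases h : σ j d with
      | none => simp
      | some i =>
        rcases i with x | y | z <;> simp only [Option.elim, tdmInstance] <;>
          split <;> simp
    rw [hqual] at hq
    have e0 : ((σ j 0).elim 0 fun i => (tdmInstance X Y Z W).e i j) = 1 := by
      have := bound 0; have := bound 1; have := bound 2; omega
    have e1 : ((σ j 1).elim 0 fun i => (tdmInstance X Y Z W).e i j) = 1 := by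
      have := bound 0; have := bound 1; have := bound 2; omega
    have e2 : ((σ j 2).elim 0 fun i => (tdmInstance X Y Z W).e i j) = 1 := by
      have := bound 0; have := bound 1; have := bound 2; omega
    refine ⟨?_, ?_, ?_⟩
    · cases h : σ j 0 with
      | none => rw [h] at e0; simp at e0
      | some i =>
        have hav := hd j 0 i h
        rw [h] at e0
        rcases i with x | y | z
        · simp only [Option.elim, tdmInstance] at e0
          split at e0
          · next hx => rw [hx]
          · simp at e0
        · simp [tdmInstance] at hav
        · simp [tdmInstance] at hav
    · cases h : σ j 1 with
      | none => rw [h] at e1; simp at e1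
      | some i =>
        have hav := hd j 1 i h
        rw [h] at e1
        rcases i with x | y | z
        · simp [tdmInstance] at hav
        · simp only [Option.elim, tdmInstance] at e1
          split at e1
          · next hx => rw [hx]
          · simp at e1
        · simp [tdmInstance] at hav
    · cases h : σ j 2 with
      | none => rw [h] at e2; simp at e2
      | some i =>
        have hav := hd j 2 i h
        rw [h] at e2
        rcases i with x | y | z
        · simp [tdmInstance] at hav
        · simp [tdmInstance] at hav
        · simp only [Option.elim, tdmInstance] at e2
          split at e2
          · next hx => rw [hx]
          · simp at e2
  have hfilter : (W.attach.filter (fun j =>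
            3 ≤ (tdmInstance X Y Z W).qual σ j ∧
            σ j 0 = some (Sum.inl j.val.1) ∧
            σ j 1 = some (Sum.inr (Sum.inl j.val.2.1)) ∧
            σ j 2 = some (Sum.inr (Sum.inr j.val.2.2)))) =
      W.attach.filter (fun j => 3 ≤ (tdmInstance X Y Z W).qual σ j) := by
    apply Finset.filter_congr
    intro j _
    constructor
    · exact fun h => h.1
    · exact fun h => ⟨h, key j h⟩
  refine ⟨?_, ?_, ?_⟩
  · intro w hw
    rw [hM] at hw
    simp only [Finset.mem_image] at hw
    obtain ⟨j, _, rfl⟩ := hw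
    exact j.2
  · intro w hw w' hw' hne
    rw [hM] at hw hw'
    simp only [Finset.mem_image, Finset.mem_filter] at hw hw'
    obtain ⟨j, ⟨_, _, hj0, hj1, hj2⟩, rfl⟩ := hw
    obtain ⟨j', ⟨_, _, hj0', hj1', hj2'⟩, rfl⟩ := hw'
    have hjj : j ≠ j' := fun h => hne (by rw [h])
    refine ⟨?_, ?_, ?_⟩
    · intro h
      exact ha 0 j j' (Sum.inl j.val.1) hjj hj0 (by rw [hj0', h])
    · intro h
      exact ha 1 j j' (Sum.inr (Sum.inl j.val.2.1)) hjj hj1 (by rw [hj1', h])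
    · intro h
      exact ha 2 j j' (Sum.inr (Sum.inr j.val.2.2)) hjj hj2 (by rw [hj2', h])
  · rw [hM, Finset.card_image_of_injective _ Subtype.val_injective, hfilter]
    rw [← hm]
    unfold TASInstance.measure
    rw [Finset.univ_eq_attach]
    rfl
end

section
/- A 3DM instance (X, Y, Z, W) with |X| = |Y| = |Z| = u has a perfect 3-dimensional matching if and only if the corresponding constructed TAS instance has a feasible solution with at least u completed jobs. -/
section Aux

variable {X Y Z : Type} [DecidableEq X] [DecidableEq Y] [DecidableEq Z]

lemma tdm_qual_eq (W : Finset (X × Y × Z)) (σ : {w // w ∈ W} → ℕ → Option (X ⊕ Y ⊕ Z))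
    (j : {w // w ∈ W}) :
    (tdmInstance X Y Z W).qual σ j =
      ((σ j 0).elim 0 fun i => (tdmInstance X Y Z W).e i j) +
      ((σ j 1).elim 0 fun i => (tdmInstance X Y Z W).e i j) +
      ((σ j 2).elim 0 fun i => (tdmInstance X Y Z W).e i j) := by
  show ∑ d ∈ Finset.range 3, _ = _
  rw [Finset.sum_range_succ, Finset.sum_range_succ, Finset.sum_range_one]
  rfl

lemma tdm_e_le_one (W : Finset (X × Y × Z)) (i : X ⊕ Y ⊕ Z) (k : {w // w ∈ W}) :
    (tdmInstance X Y Z W).e i k ≤ 1 := by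
  rcases i with x | y | z <;> simp only [tdmInstance] <;> split <;> simp

lemma tdm_term_le_one (W : Finset (X × Y × Z)) (o : Option (X ⊕ Y ⊕ Z)) (k : {w // w ∈ W}) :
    (o.elim 0 fun i => (tdmInstance X Y Z W).e i k) ≤ 1 := by
  cases o with
  | none => simp
  | some i => exact tdm_e_le_one W i k

lemma tdm_w_le_one (W : Finset (X × Y × Z)) (i : X ⊕ Y ⊕ Z) (k : {w // w ∈ W}) :
    (tdmInstance X Y Z W).w i k ≤ 1 := by
  rcases i with x | y | z <;> simp only [tdmInstance] <;> split <;> simp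

lemma tdm_wterm_le_one (W : Finset (X × Y × Z)) (o : Option (X ⊕ Y ⊕ Z)) (k : {w // w ∈ W}) :
    (o.elim 0 fun i => (tdmInstance X Y Z W).w i k) ≤ 1 := by
  cases o with
  | none => simp
  | some i => exact tdm_w_le_one W i k

/-- A completed job in the constructed instance is assigned exactly its triple's
three workers on days 0, 1, 2. -/
lemma tdm_completed_assign (W : Finset (X × Y × Z))
    (σ : {w // w ∈ W} → ℕ → Option (X ⊕ Y ⊕ Z))
    (hf : (tdmInstance X Y Z W).Feasible σ) (j : {w // w ∈ W})
    (hq : 3 ≤ (tdmInstance X Y Z W).qual σ j) :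
    σ j 0 = some (Sum.inl j.val.1) ∧ σ j 1 = some (Sum.inr (Sum.inl j.val.2.1)) ∧
      σ j 2 = some (Sum.inr (Sum.inr j.val.2.2)) := by
  rw [tdm_qual_eq] at hq
  have h0 := tdm_term_le_one W (σ j 0) j
  have h1 := tdm_term_le_one W (σ j 1) j
  have h2 := tdm_term_le_one W (σ j 2) j
  have e0 : ((σ j 0).elim 0 fun i => (tdmInstance X Y Z W).e i j) = 1 := by omega
  have e1 : ((σ j 1).elim 0 fun i => (tdmInstance X Y Z W).e i j) = 1 := by omega
  have e2 : ((σ j 2).elim 0 fun i => (tdmInstance X Y Z W).e i j) = 1 := by omega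
  obtain ⟨-, -, hav, -, -, -⟩ := hf
  refine ⟨?_, ?_, ?_⟩
  · rcases h : σ j 0 with - | i
    · rw [h] at e0; simp at e0
    · have hava := hav j 0 i h
      rcases i with x | y | z
      · rw [h] at e0
        simp only [Option.elim, tdmInstance] at e0
        split at e0
        · subst ‹x = _›; rfl
        · simp at e0
      · simp [tdmInstance] at hava
      · simp [tdmInstance] at hava
  · rcases h : σ j 1 with - | i
    · rw [h] at e1; simp at e1
    · have hava := hav j 1 i h
      rcases i with x | y | z
      · simp [tdmInstance] at hava
      · rw [h] at e1
        simp only [Option.elim, tdmInstance] at e1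
        split at e1
        · subst ‹y = _›; rfl
        · simp at e1
      · simp [tdmInstance] at hava
  · rcases h : σ j 2 with - | i
    · rw [h] at e2; simp at e2
    · have hava := hav j 2 i h
      rcases i with x | y | z
      · simp [tdmInstance] at hava
      · simp [tdmInstance] at hava
      · rw [h] at e2
        simp only [Option.elim, tdmInstance] at e2
        split at e2
        · subst ‹z = _›; rfl
        · simp at e2

end Aux

/-- the 3DM instance `(X,Y,Z,W)` with `|X| = |Y| = |Z| = u` has a perfect
3-dimensional matching iff the constructed TAS instance has a feasible solution with at
least `u` completed jobs. -/
theorem tdm_iff_tas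
    {X Y Z : Type} [DecidableEq X] [DecidableEq Y] [DecidableEq Z]
    [Fintype X] [Fintype Y] [Fintype Z] (u : ℕ)
    (hX : Fintype.card X = u) (hY : Fintype.card Y = u) (hZ : Fintype.card Z = u)
    (W : Finset (X × Y × Z)) :
    (∃ M : Finset (X × Y × Z), M ⊆ W ∧ Is3DMatching M ∧ M.card = u) ↔
      (∃ σ : {w // w ∈ W} → ℕ → Option (X ⊕ Y ⊕ Z),
        (tdmInstance X Y Z W).Feasible σ ∧
          u ≤ (tdmInstance X Y Z W).measure σ) := by
  constructor
  · rintro ⟨M, hMW, hmatch, hcard⟩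
    refine ⟨fun j d =>
      if j.val ∈ M then
        (if d = 0 then some (Sum.inl j.val.1)
         else if d = 1 then some (Sum.inr (Sum.inl j.val.2.1))
         else if d = 2 then some (Sum.inr (Sum.inr j.val.2.2))
         else none)
      else none, ⟨?_, ?_, ?_, ?_, ?_, ?_⟩, ?_⟩
    · -- (a)
      intro d j j' i hne hj hj'
      by_cases hjM : j.val ∈ M
      · by_cases hj'M : j'.val ∈ M
        · have hvals : j.val ≠ j'.val := fun h => hne (Subtype.ext h)
          obtain ⟨h1, h2, h3⟩ := hmatch j.val hjM j'.val hj'M hvals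
          simp only [hjM, hj'M, if_true] at hj hj'
          split_ifs at hj hj' <;> simp_all <;>
            (rw [← hj'] at hj;
             simp only [Sum.inl.injEq, Sum.inr.injEq] at hj;
             first | exact h1 hj | exact h2 hj | exact h3 hj)
        · simp [hj'M] at hj'
      · simp [hjM] at hj
    · -- (c)
      intro j d d' i hdd hj hj'
      by_cases hjM : j.val ∈ M
      · simp only [hjM, if_true] at hj hj'
        split_ifs at hj hj' <;> simp_all <;> (rw [← hj'] at hj; simp at hj)
      · simp [hjM] at hj
    · -- (d)
      intro j d i h
      by_cases hjM : j.val ∈ M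
      · simp only [hjM, if_true] at h
        split_ifs at h <;> simp_all [tdmInstance] <;> (subst h; rfl)
      · simp [hjM] at h
    · -- (e)
      intro j d h
      simp only [tdmInstance] at h
      omega
    · -- vectors of dimension t
      intro j d h
      have h3 : 3 ≤ d := h
      dsimp only
      split_ifs <;> first | rfl | omega
    · -- (f)
      intro j
      show (tdmInstance X Y Z W).cost _ j ≤ 3
      have : (tdmInstance X Y Z W).cost
          (fun j d =>
            if j.val ∈ M then
              (if d = 0 then some (Sum.inl j.val.1)
               else if d = 1 then some (Sum.inr (Sum.inl j.val.2.1))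
               else if d = 2 then some (Sum.inr (Sum.inr j.val.2.2))
               else none)
            else none) j ≤ ∑ _d ∈ Finset.range 3, 1 :=
        Finset.sum_le_sum fun d _ => tdm_wterm_le_one W _ j
      simpa using this
    · -- measure ≥ u
      have hsub : M ⊆ (Finset.univ.filter fun j : {w // w ∈ W} =>
          (tdmInstance X Y Z W).Q j ≤ (tdmInstance X Y Z W).qual
            (fun j d =>
              if j.val ∈ M then
                (if d = 0 then some (Sum.inl j.val.1)
                 else if d = 1 then some (Sum.inr (Sum.inl j.val.2.1))
                 else if d = 2 then some (Sum.inr (Sum.inr j.val.2.2))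
                 else none)
              else none) j).image Subtype.val := by
        intro m hm
        refine Finset.mem_image.2 ⟨⟨m, hMW hm⟩, ?_, rfl⟩
        simp only [Finset.mem_filter, Finset.mem_univ, true_and]
        show (3 : ℕ) ≤ _
        rw [tdm_qual_eq]
        simp [hm, tdmInstance]
      calc u = M.card := hcard.symm
        _ ≤ _ := le_trans (Finset.card_le_card hsub) Finset.card_image_le
  · rintro ⟨σ, hfeas, hmeas⟩
    set S := Finset.univ.filter
      (fun j : {w // w ∈ W} => (3 : ℕ) ≤ (tdmInstance X Y Z W).qual σ j) with hSdef
    have hmeas' : u ≤ S.card := hmeas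
    have ha : ∀ j ∈ S, σ j 0 = some (Sum.inl j.val.1) ∧
        σ j 1 = some (Sum.inr (Sum.inl j.val.2.1)) ∧
        σ j 2 = some (Sum.inr (Sum.inr j.val.2.2)) := fun j hj =>
      tdm_completed_assign W σ hfeas j (Finset.mem_filter.1 hj).2
    refine ⟨S.image Subtype.val, ?_, ?_, ?_⟩
    · intro m hm
      obtain ⟨j, -, rfl⟩ := Finset.mem_image.1 hm
      exact j.2
    · intro w hw w' hw' hne
      obtain ⟨j, hjS, rfl⟩ := Finset.mem_image.1 hw
      obtain ⟨j', hj'S, rfl⟩ := Finset.mem_image.1 hw'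
      have hjj' : j ≠ j' := fun h => hne (congrArg _ h)
      refine ⟨fun h => ?_, fun h => ?_, fun h => ?_⟩
      · exact hfeas.1 0 j j' _ hjj' (ha j hjS).1 (by rw [(ha j' hj'S).1, h])
      · exact hfeas.1 1 j j' _ hjj' (ha j hjS).2.1 (by rw [(ha j' hj'S).2.1, h])
      · exact hfeas.1 2 j j' _ hjj' (ha j hjS).2.2 (by rw [(ha j' hj'S).2.2, h])
    · have hinj : (S.image Subtype.val).card = S.card :=
        Finset.card_image_of_injective _ Subtype.val_injective
      have hle : S.card ≤ Fintype.card X := by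
        rw [← Finset.card_univ]
        refine Finset.card_le_card_of_injOn (fun j => j.val.1)
          (fun _ _ => Finset.mem_univ _) ?_
        intro j hj j' hj' h
        have h' : (j : X × Y × Z).1 = (j' : X × Y × Z).1 := h
        by_contra hne
        exact hfeas.1 0 j j' _ hne (ha j (Finset.mem_coe.1 hj)).1
          (by rw [(ha j' (Finset.mem_coe.1 hj')).1, h'])
      rw [hinj]
      omega
end

section
/- The output of the tas-online algorithm is always a feasible solution for its input TAS instance: iterating day by day, considering only uncompleted jobs with r_j ≤ d and workers available on day d, excluding edges (j,i) where i was already assigned to j, where e_{i,k_j} = 0, or where w_{i,k_j} exceeds the remaining budget C_j − c_j, and applying a maximum-weight bipartite matching M_d each day, yields an assignment satisfying constraints (a)–(f). -/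
/-- Cost of job `j` accumulated before day `d` (used by the online algorithm). -/
def TASInstance.costBefore {K Worker Job : Type} (x : TASInstance K Worker Job)
    (M : ℕ → Job → Option Worker) (j : Job) (d : ℕ) : ℕ :=
  ∑ d' ∈ Finset.range d, ((M d' j).elim 0 fun i => x.w i (x.dom j))

/-- Quality of job `j` accumulated before day `d` (used by the online algorithm). -/
def TASInstance.qualBefore {K Worker Job : Type} (x : TASInstance K Worker Job)
    (M : ℕ → Job → Option Worker) (j : Job) (d : ℕ) : ℕ :=
  ∑ d' ∈ Finset.range d, ((M d' j).elim 0 fun i => x.e i (x.dom j))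

/-- the output of `tas-online` is always a feasible solution. The
algorithm proceeds day by day and, on each day `d`, picks any bipartite matching `M d`
between the active (released, uncompleted) jobs and the workers available on day `d`,
using only edges `(j,i)` where `i` was not already assigned to `j`, `e_{i,k_j} ≠ 0`,
and `w_{i,k_j}` does not exceed the remaining budget `C_j - c_j`. Whatever matchings are
chosen, the resulting assignment `U_{jd} = M d j` satisfies constraints (a)-(f). -/
theorem tas_online_output_feasible {K Worker Job : Type}
    (x : TASInstance K Worker Job) (M : ℕ → Job → Option Worker)
    -- the algorithm only assigns within the scheduling period
    (ht : ∀ d j, x.t ≤ d → M d j = none)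
    -- each `M d` is a matching: each worker matched to at most one active job
    (hmatch : ∀ d j j' i, j ≠ j' → M d j = some i → M d j' ≠ some i)
    -- only released jobs are active
    (hrel : ∀ d j i, M d j = some i → x.r j ≤ d)
    -- only uncompleted jobs are active
    (huncomp : ∀ d j i, M d j = some i → x.qualBefore M j d < x.Q j)
    -- only workers available on day `d` are active
    (havail : ∀ d j i, M d j = some i → x.avail i d = true)
    -- edge excluded if the worker was already assigned to the job
    (hnotbefore : ∀ d j i, M d j = some i → ∀ d' < d, M d' j ≠ some i)
    -- edge excluded if the worker has no expertise in the job's domain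
    (hexp : ∀ d j i, M d j = some i → x.e i (x.dom j) ≠ 0)
    -- edge excluded if the wage exceeds the remaining budget
    (hwage : ∀ d j i, M d j = some i → x.w i (x.dom j) ≤ x.C j - x.costBefore M j d) :
    x.Feasible (fun j d => M d j) := by
  have hcb : ∀ j d, x.costBefore M j d ≤ x.C j := by
    intro j d
    induction d with
    | zero => simp [TASInstance.costBefore]
    | succ d ih =>
      rw [TASInstance.costBefore, Finset.sum_range_succ]
      cases h : M d j with
      | none => simpa [TASInstance.costBefore] using ih
      | some i =>
        have hw := hwage d j i h
        have : x.costBefore M j d + x.w i (x.dom j) ≤ x.C j := by omega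
        simpa [TASInstance.costBefore] using this
  refine ⟨?_, ?_, ?_, ?_, ?_, ?_⟩
  · intro d j j' i hne hj hj'
    exact hmatch d j j' i hne hj hj'
  · intro j d d' i hne hd hd'
    rcases Nat.lt_or_ge d d' with h | h
    · exact hnotbefore d' j i hd' d h hd
    · exact hnotbefore d j i hd d' (lt_of_le_of_ne h (Ne.symm hne)) hd'
  · intro j d i h; exact havail d j i h
  · intro j d hd
    cases h : M d j with
    | none => exact h
    | some i => exact absurd (hrel d j i h) (by omega)
  · intro j d hd; exact ht d j hd
  · intro j
    have : x.cost (fun j d => M d j) j = x.costBefore M j x.t := rfl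
    rw [this]; exact hcb j x.t
end
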